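/- arXiv:1810.12677 — 9 statements merged into one kernel-verified Lean document; each statement's English description precedes it below -/
import Mathlib

section
/- Let K be a field and S an n×n matrix over K (n a nonempty finite index type). Then the characteristic polynomial of S equals the minimal polynomial of S if and only if every n×n matrix H over K satisfying HS = SH can be written as H = p(S) for some polynomial p with coefficients in K. -/
/-!
Make `K^n` a `K[X]`-module `M` through `S`. Matrices commuting with `S` are exactly the
`K[X]`-linear endomorphisms of `M`, and polynomials in `S` are the scalar ones. An element whose
annihilator is all of `Ann M = (minpoly S)` spans a submodule of dimension `deg (minpoly S)`, so
`charpoly S = minpoly S` iff `M` is cyclic, and every endomorphism of a cyclic module is scalar.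
Conversely, write `M ≅ ⨁ K[X] ⧸ (qᵢ)` with prime powers `qᵢ`. If `qᵢ, qⱼ` (`i ≠ j`) have a common
irreducible factor `p`, say `qⱼ = p c`, then multiplication by `c` maps the `i`-th summand to the
`j`-th one and is not scalar; otherwise the `qᵢ` are pairwise coprime and `M` is cyclic by the
Chinese remainder theorem.
-/

open Function Polynomial Matrix Module

theorem exists_dvd_mul_not_dvd_of_not_isCoprime {R : Type*} [CommRing R] [IsDomain R]
    [IsPrincipalIdealRing R] {a b : R} (hb : b ≠ 0) (h : ¬ IsCoprime a b) :
    ∃ c, b ∣ c * a ∧ ¬ b ∣ c := by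
  obtain ⟨p, hp, hpa, c, rfl⟩ : ∃ p, Irreducible p ∧ p ∣ a ∧ p ∣ b := by
    by_contra! H
    exact h (isCoprime_of_irreducible_dvd (fun h' => hb h'.2) H)
  have hc : c ≠ 0 := right_ne_zero_of_mul hb
  refine ⟨c, mul_comm a c ▸ mul_dvd_mul_right hpa c, fun hdvd => hp.not_isUnit ?_⟩
  exact isUnit_of_dvd_one ((mul_dvd_mul_iff_right hc).mp (by rwa [one_mul]))

namespace Module

theorem IsPrincipal.surjective_algebraMap_end {R M : Type*} [CommSemiring R] [AddCommMonoid M]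
    [Module R M] [IsPrincipal R M] : Surjective (algebraMap R (End R M)) := by
  obtain ⟨x, hx⟩ := Submodule.IsPrincipal.principal (⊤ : Submodule R M)
  have hgen (y : M) : ∃ r : R, r • x = y :=
    Submodule.mem_span_singleton.mp (hx ▸ Submodule.mem_top)
  intro f
  obtain ⟨r, hr⟩ := hgen (f x)
  refine ⟨r, LinearMap.ext fun y => ?_⟩
  obtain ⟨s, rfl⟩ := hgen y
  rw [algebraMap_end_apply, map_smul, ← hr, smul_comm]

variable {R : Type*} [CommRing R] {ι : Type*} (q : ι → R)

theorem isPrincipal_pi_quotient_of_pairwise_isCoprime [Finite ι]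
    (hq : Pairwise (IsCoprime on q)) : IsPrincipal R (Π i, R ⧸ R ∙ q i) := by
  refine ⟨⟨fun _ => Submodule.Quotient.mk 1, (eq_top_iff.mpr fun v _ => ?_).symm⟩⟩
  have hI : Pairwise (IsCoprime on fun i => Ideal.span {q i}) := fun i j hij =>
    (Ideal.isCoprime_span_singleton_iff _ _).mpr (hq hij)
  obtain ⟨r, hr⟩ := Ideal.pi_quotient_surjective hI v
  refine Submodule.mem_span_singleton.mpr ⟨r, funext fun i => ?_⟩
  rw [Pi.smul_apply, ← Submodule.Quotient.mk_smul, smul_eq_mul, mul_one, ← hr i]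
  rfl

theorem not_surjective_algebraMap_end_pi_quotient [DecidableEq ι] {i j : ι} (hij : i ≠ j) {c : R}
    (hc : q j ∣ c * q i) (hnc : ¬ q j ∣ c) :
    ¬ Surjective (algebraMap R (End R (Π k, R ⧸ R ∙ q k))) := by
  have hle : R ∙ q i ≤ (R ∙ q j).comap (c • LinearMap.id) := by
    obtain ⟨a, ha⟩ := hc
    rw [Submodule.span_singleton_le_iff_mem, Submodule.mem_comap, Submodule.mem_span_singleton]
    exact ⟨a, by simp [ha, mul_comm]⟩
  let f : End R (Π k, R ⧸ R ∙ q k) :=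
    LinearMap.single R _ j ∘ₗ Submodule.mapQ _ _ (c • LinearMap.id) hle ∘ₗ LinearMap.proj i
  rintro hsurj
  obtain ⟨r, hr⟩ := hsurj f
  have hj := congr_fun (LinearMap.congr_fun hr (Pi.single i (Submodule.Quotient.mk 1))) j
  simp only [algebraMap_end_apply, Pi.smul_apply, Pi.single_eq_of_ne hij.symm, smul_zero, f,
    LinearMap.comp_apply, LinearMap.proj_apply, Pi.single_eq_same, Submodule.mapQ_apply,
    LinearMap.smul_apply, LinearMap.id_apply, LinearMap.single_apply] at hj
  have hmem : c • 1 ∈ Ideal.span {q j} := (Submodule.Quotient.mk_eq_zero _).mp hj.symm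
  exact hnc (by simpa using Ideal.mem_span_singleton.mp hmem)

theorem isPrincipal_of_surjective_algebraMap_end [IsDomain R] [IsPrincipalIdealRing R]
    {M : Type*} [AddCommGroup M] [Module R M] [Module.Finite R M] (hM : IsTorsion R M)
    (h : Surjective (algebraMap R (End R M))) : IsPrincipal R M := by
  classical
  obtain ⟨ι, _, p, hp, e, ⟨eqv⟩⟩ := equiv_directSum_of_isTorsion hM
  let eqv' := eqv.trans (DirectSum.linearEquivFunOnFintype R ι _)
  have hsurj : Surjective (algebraMap R (End R (Π i, R ⧸ R ∙ p i ^ e i))) := by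
    have := (eqv'.conjAlgEquiv R).surjective.comp h
    simpa only [comp_def, AlgEquiv.commutes] using this
  rw [eqv'.isPrincipal_iff]
  by_contra hnp
  obtain ⟨i, j, hij, hij'⟩ : ∃ i j, i ≠ j ∧ ¬ IsCoprime (p i ^ e i) (p j ^ e j) := by
    by_contra! hcop
    exact hnp (isPrincipal_pi_quotient_of_pairwise_isCoprime _ fun i j hij => hcop i j hij)
  obtain ⟨c, hc, hnc⟩ :=
    exists_dvd_mul_not_dvd_of_not_isCoprime (pow_ne_zero _ (hp j).ne_zero) hij'
  exact not_surjective_algebraMap_end_pi_quotient _ hij hc hnc hsurj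

end Module

namespace LinearMap

theorem surjective_algebraMap_end_aeval_iff_forall_commute {R M : Type*} [CommRing R]
    [AddCommGroup M] [Module R M] (φ : Module.End R M) :
    Surjective (algebraMap R[X] (Module.End R[X] (AEval' φ))) ↔
      ∀ ψ : Module.End R M, Commute ψ φ → ∃ p : R[X], aeval φ p = ψ := by
  let of := AEval'.of φ
  constructor
  · intro h ψ hψ
    obtain ⟨p, hp⟩ := h (LinearMap.ofAEval φ (of.toLinearMap ∘ₗ ψ) fun m => by
      show of (ψ (φ m)) = X • of (ψ m)
      rw [AEval'.X_smul_of]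
      exact congrArg of (LinearMap.congr_fun hψ m))
    refine ⟨p, LinearMap.ext fun m => ?_⟩
    exact congrArg of.symm (LinearMap.congr_fun hp (of m))
  · intro h F
    let ψ : Module.End R M := of.symm.toLinearMap ∘ₗ F.restrictScalars R ∘ₗ of.toLinearMap
    have hψ : Commute ψ φ := LinearMap.ext fun m => by
      show of.symm (F (of (φ m))) = φ (of.symm (F (of m)))
      rw [← AEval'.X_smul_of, map_smul, AEval'.of_symm_X_smul]
    obtain ⟨p, hp⟩ := h ψ hψ
    refine ⟨p, LinearMap.ext fun y => ?_⟩
    exact congrArg of (LinearMap.congr_fun hp (of.symm y))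

variable {K V : Type*} [Field K] [AddCommGroup V] [Module K V] (φ : Module.End K V)

theorem finrank_span_singleton_eq_natDegree_minpoly (x : AEval' φ)
    (hx : ker (toSpanSingleton K[X] _ x) = annihilator K[X] (AEval' φ)) :
    finrank K (K[X] ∙ x) = (minpoly K φ).natDegree := by
  rw [← finrank_quotient_span_eq_natDegree, span_minpoly_eq_annihilator, ← hx]
  let e := ((toSpanSingleton K[X] _ x).quotKerEquivRange.trans
    (LinearEquiv.ofEq _ _ (span_singleton_eq_range K[X] _ x).symm))
  exact (e.restrictScalars K).finrank_eq.symm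

variable [FiniteDimensional K V]

theorem charpoly_eq_minpoly_iff_natDegree_minpoly_eq_finrank :
    φ.charpoly = minpoly K φ ↔ (minpoly K φ).natDegree = finrank K V := by
  refine ⟨fun h => h ▸ φ.charpoly_natDegree, fun h => ?_⟩
  exact eq_of_monic_of_dvd_of_natDegree_le (minpoly.monic (Algebra.IsIntegral.isIntegral φ))
    φ.charpoly_monic (minpoly_dvd_charpoly φ) (by rw [charpoly_natDegree, h])

theorem charpoly_eq_minpoly_iff_isPrincipal :
    φ.charpoly = minpoly K φ ↔ IsPrincipal K[X] (AEval' φ) := by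
  have hV : finrank K (AEval' φ) = finrank K V := (AEval'.of φ).finrank_eq.symm
  rw [charpoly_eq_minpoly_iff_natDegree_minpoly_eq_finrank]
  constructor
  · intro h
    obtain ⟨x, hx⟩ := exists_ker_toSpanSingleton_eq_annihilator K[X] (AEval' φ)
    refine ⟨⟨x, Eq.symm ?_⟩⟩
    rw [← Submodule.restrictScalars_eq_top_iff K]
    apply Submodule.eq_top_of_finrank_eq
    rw [hV, ← h, ← finrank_span_singleton_eq_natDegree_minpoly φ x hx]
    rfl
  · rintro ⟨⟨x, hx⟩⟩
    have hker : ker (toSpanSingleton K[X] _ x) = annihilator K[X] (AEval' φ) := by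
      rw [← Submodule.annihilator_span_singleton, ← hx, Submodule.annihilator_top]
    rw [← finrank_span_singleton_eq_natDegree_minpoly φ x hker, ← hx, ← hV]
    exact (Submodule.topEquiv.restrictScalars K).finrank_eq

theorem charpoly_eq_minpoly_iff_forall_commute :
    φ.charpoly = minpoly K φ ↔ ∀ ψ : Module.End K V, Commute ψ φ → ∃ p : K[X], aeval φ p = ψ := by
  rw [charpoly_eq_minpoly_iff_isPrincipal, ← surjective_algebraMap_end_aeval_iff_forall_commute]
  exact ⟨fun _ => IsPrincipal.surjective_algebraMap_end,
    isPrincipal_of_surjective_algebraMap_end (AEval.isTorsion_of_finiteDimensional K V φ)⟩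

end LinearMap

theorem stmt_0_general {K : Type*} [Field K] {n : Type*} [Fintype n] [DecidableEq n]
    (S : Matrix n n K) :
    S.charpoly = minpoly K S ↔
      ∀ H : Matrix n n K, H * S = S * H → ∃ p : K[X], Polynomial.aeval S p = H := by
  let e : Matrix n n K ≃ₐ[K] Module.End K (n → K) := toLinAlgEquiv'
  rw [← charpoly_toLin', ← minpoly.algEquiv_eq e, show toLin' S = e S from rfl,
    LinearMap.charpoly_eq_minpoly_iff_forall_commute]
  refine (e.toEquiv.forall_congr fun H => ?_).symm
  simp only [AlgEquiv.toEquiv_eq_coe, EquivLike.coe_coe, commute_iff_eq, ← map_mul,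
    e.injective.eq_iff, aeval_algHom_apply]

theorem stmt_0 {K : Type*} [Field K] {n : Type*} [Fintype n] [DecidableEq n] [Nonempty n]
    (S : Matrix n n K) :
    S.charpoly = minpoly K S ↔
      ∀ H : Matrix n n K, H * S = S * H → ∃ p : K[X], Polynomial.aeval S p = H :=
  stmt_0_general S
end

section
/- For any n×n complex matrix S, there exists an n×n complex matrix T and a polynomial r with complex coefficients such that S = r(T) and the characteristic polynomial of T equals the minimal polynomial of T. -/
/-!
As a `ℂ[X]`-module via `S`, `ℂⁿ` splits into Jordan blocks `ℂ[X] ⧸ (X - λᵢ) ^ eᵢ`. The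
substitution `X ↦ X + λᵢ - μᵢ` identifies each block with the algebra `ℂ[X] ⧸ (X - μᵢ) ^ eᵢ`,
and for pairwise distinct `μᵢ` the Chinese remainder theorem glues these into the single
algebra `ℂ[X] ⧸ (q)`, `q = ∏ (X - μᵢ) ^ eᵢ`. Transported there, `S` becomes multiplication
by some class `r(X)`; take `T` to be multiplication by `X`, whose characteristic and minimal
polynomials are both `q`.
-/

open Polynomial Function

namespace Polynomial

variable {R : Type*} [CommRing R]

noncomputable def quotientSpanXSubCPowAlgEquiv (a b : R) (e : ℕ) :
    (R[X] ⧸ Ideal.span {(X - C a) ^ e}) ≃ₐ[R] R[X] ⧸ Ideal.span {(X - C b) ^ e} :=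
  Ideal.quotientEquivAlg _ _ (algEquivAevalXAddC (a - b)) <| by
    rw [Ideal.map_span, Set.image_singleton]
    congr
    simp [algEquivAevalXAddC]
    ring

theorem exists_algEquiv_adjoinRoot_pi_quotientSpanXSubCPow {K ι : Type*} [Field K] [Infinite K]
    [Fintype ι] (l : ι → K) (e : ι → ℕ) :
    ∃ q : K[X], q ≠ 0 ∧
      Nonempty ((Π i, K[X] ⧸ Ideal.span {(X - C (l i)) ^ e i}) ≃ₐ[K] AdjoinRoot q) := by
  obtain ⟨μ, hμ⟩ : ∃ μ : ι → K, Injective μ :=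
    ⟨_, ((Fintype.equivFin ι).toEmbedding.trans
      (Fin.valEmbedding.trans (Infinite.natEmbedding K))).injective⟩
  have hcop : Pairwise (IsCoprime on fun i ↦ (X - C (μ i)) ^ e i) := fun i j hij ↦
    (pairwise_coprime_X_sub_C hμ hij).pow
  have hcopI : Pairwise (IsCoprime on fun i ↦ Ideal.span {(X - C (μ i)) ^ e i}) :=
    fun i j hij ↦ (Ideal.isCoprime_span_singleton_iff _ _).mpr (hcop hij)
  let crt := AlgEquiv.ofRingEquiv (R := K) (f := Ideal.quotientInfRingEquivPiQuotient _ hcopI)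
    (fun _ ↦ rfl)
  refine ⟨∏ i, (X - C (μ i)) ^ e i, Finset.prod_ne_zero_iff.mpr fun i _ ↦ pow_ne_zero _
    (X_sub_C_ne_zero _), ⟨?_⟩⟩
  exact (AlgEquiv.piCongrRight fun i ↦ quotientSpanXSubCPowAlgEquiv (l i) (μ i) (e i)).trans
    (crt.symm.trans
      (Ideal.quotientEquivAlgOfEq K (Ideal.iInf_span_singleton fun _ _ ↦ (hcop ·))))

end Polynomial

theorem PowerBasis.charpoly_lmul_gen {R A : Type*} [CommRing R] [Ring A] [Algebra R A]
    [Module.Free R A] [Module.Finite R A] (pb : PowerBasis R A) :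
    (Algebra.lmul R A pb.gen).charpoly = minpoly R pb.gen := by
  rw [← LinearMap.charpoly_toMatrix _ pb.basis, ← Algebra.leftMulMatrix_apply,
    charpoly_leftMulMatrix]

namespace Module.End

theorem exists_aeval_eq_and_charpoly_eq_minpoly_of_linearEquiv {R V A : Type*} [CommRing R]
    [AddCommGroup V] [Module R V] [Module.Free R V] [Module.Finite R V] [Ring A] [Algebra R A]
    (pb : PowerBasis R A) (E : V ≃ₗ[R] A) (f : Module.End R V) (a : A)
    (hf : ∀ v, E (f v) = a * E v) :
    ∃ (t : Module.End R V) (r : R[X]), aeval t r = f ∧ t.charpoly = minpoly R t := by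
  obtain ⟨r, rfl⟩ := pb.exists_eq_aeval' a
  have := Module.Free.of_basis pb.basis
  have := pb.finite
  let c := E.symm.conjAlgEquiv R
  refine ⟨c (Algebra.lmul R A pb.gen), r, ?_, ?_⟩
  · rw [aeval_algHom_apply, aeval_algHom_apply]
    ext v
    simp [c, LinearEquiv.conjAlgEquiv_apply, ← hf]
  · rw [minpoly.algEquiv_eq, minpoly.algHom_eq _ Algebra.lmul_injective,
      ← pb.charpoly_lmul_gen]
    exact E.symm.charpoly_conj _

universe u

variable {K : Type u} {V : Type*} [Field K] [IsAlgClosed K] [AddCommGroup V] [Module K V]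
  [FiniteDimensional K V]

theorem exists_linearEquiv_pi_quotientSpanXSubCPow (f : Module.End K V) :
    ∃ (ι : Type u) (_ : Fintype ι) (l : ι → K) (e : ι → ℕ),
      Nonempty (AEval' f ≃ₗ[K[X]] Π i, K[X] ⧸ Ideal.span {(X - C (l i)) ^ e i}) := by
  obtain ⟨ι, hι, p, hp, e, ⟨g⟩⟩ :=
    Module.equiv_directSum_of_isTorsion (Module.AEval.isTorsion_of_finiteDimensional K V f)
  have hlin : ∀ i, ∃ l, Ideal.span {p i ^ e i} = Ideal.span {(X - C l) ^ e i} := fun i ↦ by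
    obtain ⟨l, hl⟩ := IsAlgClosed.exists_root (p i) (degree_pos_of_irreducible (hp i)).ne'
    have := (irreducible_X_sub_C l).associated_of_dvd (hp i) (dvd_iff_isRoot.mpr hl)
    exact ⟨l, Ideal.span_singleton_eq_span_singleton.mpr this.symm.pow_pow⟩
  choose l hl using hlin
  exact ⟨ι, hι, l, e, ⟨g.trans ((DirectSum.linearEquivFunOnFintype K[X] ι _).trans
    (LinearEquiv.piCongrRight fun i ↦ Submodule.quotEquivOfEq _ _ (hl i)))⟩⟩

theorem exists_aeval_eq_and_charpoly_eq_minpoly (f : Module.End K V) :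
    ∃ (t : Module.End K V) (r : K[X]), aeval t r = f ∧ t.charpoly = minpoly K t := by
  obtain ⟨ι, _, l, e, ⟨g⟩⟩ := exists_linearEquiv_pi_quotientSpanXSubCPow f
  obtain ⟨q, hq, ⟨Ξ⟩⟩ := exists_algEquiv_adjoinRoot_pi_quotientSpanXSubCPow l e
  let E := (AEval'.of f).trans ((g.restrictScalars K).trans Ξ.toLinearEquiv)
  refine exists_aeval_eq_and_charpoly_eq_minpoly_of_linearEquiv (AdjoinRoot.powerBasis hq) E f
    (Ξ (algebraMap K[X] _ X)) fun v ↦ ?_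
  calc E (f v) = Ξ (g ((X : K[X]) • AEval'.of f v)) := by simp [E, AEval'.X_smul_of]
    _ = Ξ (algebraMap K[X] _ X) * E v := by
      rw [map_smul]
      exact (congrArg Ξ (Algebra.smul_def _ _)).trans (map_mul _ _ _)

end Module.End

open Matrix

theorem stmt_1 {n : ℕ} (S : Matrix (Fin n) (Fin n) ℂ) :
    ∃ (T : Matrix (Fin n) (Fin n) ℂ) (r : ℂ[X]),
      S = Polynomial.aeval T r ∧ T.charpoly = minpoly ℂ T := by
  obtain ⟨t, r, hr, ht⟩ :=
    Module.End.exists_aeval_eq_and_charpoly_eq_minpoly (toLinAlgEquiv' S)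
  refine ⟨toLinAlgEquiv'.symm t, r, ?_, ?_⟩
  · rw [aeval_algHom_apply, hr, AlgEquiv.symm_apply_apply]
  · have hT : toLin' (toLinAlgEquiv'.symm t) = t := toLinAlgEquiv'.apply_symm_apply t
    rw [← charpoly_toLin', ← minpoly_toLin', hT, ht]
end

section
/- Let S be the 5×5 real symmetric matrix with S_{1,j} = S_{j,1} = 1 for j = 2,3,4,5 and all other entries 0, and let H be the 5×5 real matrix with H_{2,2} = H_{3,3} = 1, H_{2,3} = H_{3,2} = −1, and all other entries 0. Then there is no polynomial p with real coefficients such that p(S) = H. -/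
open Polynomial Matrix

/-! Swapping the leaves 3 and 4 is an automorphism of the star, so every polynomial in `S` is
invariant under it; `H` is not, since `H₂₃ = -1` while `H₂₄ = 0`. -/

theorem Matrix.aeval_submatrix_eq_of_submatrix_eq {n R : Type*} [Fintype n] [DecidableEq n]
    [CommSemiring R] (e : n ≃ n) {A : Matrix n n R} (hA : A.submatrix e e = A) (p : R[X]) :
    (aeval A p).submatrix e e = aeval A p := by
  have h := aeval_algHom_apply (reindexAlgEquiv R R e.symm).toAlgHom A p
  simpa [coe_reindexAlgEquiv, reindex_apply, hA] using h.symm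

theorem stmt_7 :
    let S : Matrix (Fin 5) (Fin 5) ℝ :=
      !![0,1,1,1,1; 1,0,0,0,0; 1,0,0,0,0; 1,0,0,0,0; 1,0,0,0,0]
    let H : Matrix (Fin 5) (Fin 5) ℝ :=
      !![0,0,0,0,0; 0,1,-1,0,0; 0,-1,1,0,0; 0,0,0,0,0; 0,0,0,0,0]
    ¬ ∃ p : ℝ[X], Polynomial.aeval S p = H := by
  intro S H ⟨p, hp⟩
  have hS : S.submatrix (Equiv.swap 2 3) (Equiv.swap 2 3) = S := by
    ext i j
    fin_cases i <;> fin_cases j <;> simp [S, Equiv.swap_apply_def]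
  have h12 := congrFun₂ (aeval_submatrix_eq_of_submatrix_eq _ hS p) 1 2
  rw [hp] at h12
  simp [H, Equiv.swap_apply_def] at h12
end

section
/- Let S be the 5×5 real symmetric matrix with S_{1,j} = S_{j,1} = 1 for j = 2,3,4,5 and all other entries 0, and let H be the 5×5 real matrix with H_{2,2} = H_{3,3} = 1, H_{2,3} = H_{3,2} = −1, and all other entries 0. For every real number α and every polynomial q with real coefficients, the matrix F = α·H + q(S) satisfies FS = SF; moreover, if α ≠ 0, then there is no polynomial h with real coefficients such that h(S) = F. -/
/-!
Both `H * S` and `S * H` vanish, so `F` commutes with `S`. For the second claim, swapping the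
third and fourth vertices is an automorphism of the star, so it fixes `S` and hence every `p(S)`;
if `h(S) = F` then `α • H = (h - q)(S)` would be fixed too, but the swap moves the entry `-α` of
`α • H` at position `(2, 3)` to `(2, 4)`, where `α • H` has `0`.
-/

open Polynomial Matrix

theorem Matrix.submatrix_aeval_of_submatrix_eq {n R : Type*} [Fintype n] [DecidableEq n]
    [CommSemiring R] {A : Matrix n n R} {σ : Equiv.Perm n} (hA : A.submatrix σ σ = A)
    (p : R[X]) : (aeval A p).submatrix σ σ = aeval A p := by
  have := aeval_algHom_apply (reindexAlgEquiv R R σ.symm).toAlgHom A p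
  simpa [hA] using this.symm

theorem stmt_8 :
    let S : Matrix (Fin 5) (Fin 5) ℝ :=
      !![0,1,1,1,1; 1,0,0,0,0; 1,0,0,0,0; 1,0,0,0,0; 1,0,0,0,0]
    let H : Matrix (Fin 5) (Fin 5) ℝ :=
      !![0,0,0,0,0; 0,1,-1,0,0; 0,-1,1,0,0; 0,0,0,0,0; 0,0,0,0,0]
    ∀ (α : ℝ) (q : ℝ[X]),
      (α • H + Polynomial.aeval S q) * S = S * (α • H + Polynomial.aeval S q) ∧
      (α ≠ 0 → ¬ ∃ h : ℝ[X], Polynomial.aeval S h = α • H + Polynomial.aeval S q) := by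
  intro S H α q
  have hHS : H * S = 0 := by
    ext i j; fin_cases i <;> fin_cases j <;> simp [S, H, mul_apply, Fin.sum_univ_five]
  have hSH : S * H = 0 := by
    ext i j; fin_cases i <;> fin_cases j <;> simp [S, H, mul_apply, Fin.sum_univ_five]
  have hSq : Commute S (aeval S q) := by simpa using (commute_X q).map (aeval S)
  refine ⟨?_, fun hα ⟨h, hh⟩ => hα ?_⟩
  · rw [add_mul, mul_add, smul_mul_assoc, mul_smul_comm, hHS, hSH, hSq.eq]
  · have hS : S.submatrix (Equiv.swap 2 3) (Equiv.swap 2 3) = S := by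
      ext i j; fin_cases i <;> fin_cases j <;> simp [S, Equiv.swap_apply_def]
    have hαH : aeval S (h - q) = α • H := by rw [map_sub, hh, add_sub_cancel_right]
    have := congrFun (congrFun (submatrix_aeval_of_submatrix_eq hS (h - q)) 1) 3
    simpa [hαH, H, Equiv.swap_apply_def] using this
end

section
/- Let a, b, c, d be nonzero real numbers and let M be the 5×5 real symmetric matrix whose first row is (0, a, b, c, d), whose first column is (0, a, b, c, d)ᵀ, and all of whose other entries are 0. Then the characteristic polynomial of M equals X³·(X² − (a² + b² + c² + d²)); in particular 0 is an eigenvalue of M of algebraic multiplicity 3, and the characteristic polynomial of M does not equal its minimal polynomial over ℝ (M is not shift-enabled). -/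
/-!
The star matrix has rank two: it factors as `A * B` with `A` of size `5 × 2` (columns `e₀` and
`w = (0, a, b, c, d)`) and `B` of size `2 × 5` (rows `w` and `e₀`). Hence its characteristic
polynomial is `X ^ 3` times that of the `2 × 2` matrix `B * A = !![0, s; 1, 0]`,
where `s = a² + b² + c² + d²`. By Cayley–Hamilton for `B * A`, the matrix `A * B` is annihilated
by `X * (X ^ 2 - s)`, so its minimal polynomial has degree at most `3 < 5`.
-/

open Polynomial Matrix

namespace Matrix

variable {R K m n : Type*} [Fintype m] [Fintype n] [DecidableEq m] [DecidableEq n]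

theorem mul_pow_succ_eq_mul_pow_mul [CommRing R] (A : Matrix n m R) (B : Matrix m n R) (k : ℕ) :
    (A * B) ^ (k + 1) = A * (B * A) ^ k * B := by
  induction k with
  | zero => simp
  | succ k ih =>
    rw [pow_succ, ih, pow_succ]
    simp only [Matrix.mul_assoc]

theorem aeval_mul_X_mul [CommRing R] (A : Matrix n m R) (B : Matrix m n R) (p : R[X]) :
    aeval (A * B) (X * p) = A * aeval (B * A) p * B := by
  induction p using Polynomial.induction_on' with
  | add p q hp hq => simp only [mul_add, map_add, hp, hq, Matrix.add_mul, Matrix.mul_add]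
  | monomial k r =>
    rw [X_mul_monomial, aeval_monomial, aeval_monomial, mul_pow_succ_eq_mul_pow_mul]
    simp only [← Algebra.smul_def, Matrix.mul_smul, Matrix.smul_mul, Matrix.mul_assoc]

theorem minpoly_mul_dvd [Field K] (A : Matrix n m K) (B : Matrix m n K) :
    minpoly K (A * B) ∣ X * (B * A).charpoly :=
  minpoly.dvd K _ (by rw [aeval_mul_X_mul, aeval_self_charpoly, Matrix.mul_zero, Matrix.zero_mul])

theorem charpoly_mul_ne_minpoly [Field K] (A : Matrix n m K) (B : Matrix m n K)
    (h : Fintype.card m + 1 < Fintype.card n) : (A * B).charpoly ≠ minpoly K (A * B) := by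
  intro heq
  have hdeg := natDegree_le_of_dvd (minpoly_mul_dvd A B)
    (mul_ne_zero X_ne_zero (charpoly_monic _).ne_zero)
  rw [← heq, natDegree_X_mul (charpoly_monic _).ne_zero, charpoly_natDegree_eq_dim,
    charpoly_natDegree_eq_dim] at hdeg
  omega

end Matrix

theorem Polynomial.rootMultiplicity_zero_X_pow_mul {R : Type*} [CommRing R] {q : R[X]}
    (hq : q.eval 0 ≠ 0) (k : ℕ) : (X ^ k * q).rootMultiplicity 0 = k := by
  have hq0 : q ≠ 0 := by rintro rfl; simp at hq
  simpa [mul_comm, rootMultiplicity_eq_zero hq] using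
    rootMultiplicity_mul_X_sub_C_pow (a := 0) (n := k) hq0

section StarGraph

variable {R : Type*} [CommRing R] (a b c d : R)

theorem star_five_eq_mul :
    (!![0,a,b,c,d; a,0,0,0,0; b,0,0,0,0; c,0,0,0,0; d,0,0,0,0] : Matrix (Fin 5) (Fin 5) R) =
      !![1,0; 0,a; 0,b; 0,c; 0,d] * !![0,a,b,c,d; 1,0,0,0,0] := by
  ext i j
  fin_cases i <;> fin_cases j <;> simp [mul_apply, Fin.sum_univ_succ]

theorem star_five_factors_mul_comm :
    (!![0,a,b,c,d; 1,0,0,0,0] * !![1,0; 0,a; 0,b; 0,c; 0,d] : Matrix (Fin 2) (Fin 2) R) =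
      !![0, a ^ 2 + b ^ 2 + c ^ 2 + d ^ 2; 1, 0] := by
  ext i j
  fin_cases i <;> fin_cases j <;> simp [mul_apply, Fin.sum_univ_succ, sq, add_assoc]

end StarGraph

theorem charpoly_companion_X_sq_sub_C {R : Type*} [CommRing R] [Nontrivial R] (s : R) :
    (!![0, s; 1, 0] : Matrix (Fin 2) (Fin 2) R).charpoly = X ^ 2 - C s := by
  simp [charpoly_fin_two, trace_fin_two, det_fin_two, sub_eq_add_neg]

theorem stmt_9_general (a b c d : ℝ) (ha : a ≠ 0) :
    let M : Matrix (Fin 5) (Fin 5) ℝ :=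
      !![0,a,b,c,d; a,0,0,0,0; b,0,0,0,0; c,0,0,0,0; d,0,0,0,0]
    M.charpoly = X ^ 3 * (X ^ 2 - C (a ^ 2 + b ^ 2 + c ^ 2 + d ^ 2)) ∧
      M.charpoly.rootMultiplicity 0 = 3 ∧
      M.charpoly ≠ minpoly ℝ M := by
  intro M
  have hM : M = _ := star_five_eq_mul a b c d
  have hs : a ^ 2 + b ^ 2 + c ^ 2 + d ^ 2 ≠ 0 := by positivity
  have hcharpoly : M.charpoly = X ^ 3 * (X ^ 2 - C (a ^ 2 + b ^ 2 + c ^ 2 + d ^ 2)) := by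
    rw [hM, charpoly_mul_comm_of_le _ _ (by simp), star_five_factors_mul_comm,
      charpoly_companion_X_sq_sub_C]
    simp
  refine ⟨hcharpoly, ?_, ?_⟩
  · rw [hcharpoly]
    refine rootMultiplicity_zero_X_pow_mul ?_ 3
    rwa [eval_sub, eval_pow, eval_X, eval_C, zero_pow two_ne_zero, zero_sub, neg_ne_zero]
  · rw [hM]
    exact charpoly_mul_ne_minpoly _ _ (by simp)

theorem stmt_9 (a b c d : ℝ) (ha : a ≠ 0) (hb : b ≠ 0) (hc : c ≠ 0) (hd : d ≠ 0) :
    let M : Matrix (Fin 5) (Fin 5) ℝ :=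
      !![0,a,b,c,d; a,0,0,0,0; b,0,0,0,0; c,0,0,0,0; d,0,0,0,0]
    M.charpoly = X ^ 3 * (X ^ 2 - C (a ^ 2 + b ^ 2 + c ^ 2 + d ^ 2)) ∧
      M.charpoly.rootMultiplicity 0 = 3 ∧
      M.charpoly ≠ minpoly ℝ M :=
  stmt_9_general a b c d ha
end

section
/- Let S̃ be the 5×5 real symmetric matrix with S̃_{1,j} = S̃_{j,1} = 1 for j = 2,3,4,5, S̃_{2,2} = S̃_{3,3} = 1, and all other entries 0, and let H be the 5×5 real matrix with H_{2,2} = H_{3,3} = 1, H_{2,3} = H_{3,2} = −1, and all other entries 0. Then: (i) the characteristic polynomial of S̃ equals the minimal polynomial of S̃ over ℝ (S̃ is shift-enabled); (ii) H·S̃ = S̃·H; and (iii) there exists a polynomial p with real coefficients such that p(S̃) = H. -/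
/-! A vector `v` with `v, Mv, …, M^(n-1)v` linearly independent (a cyclic vector) forces the
minimal polynomial of the `n × n` matrix `M` to have degree `n`, hence to equal the characteristic
polynomial; and every `N` commuting with such an `M` is a polynomial in `M`: writing
`N v = p(M) v`, the matrices `N` and `p(M)` agree on every `M^i v` because both commute with `M`.
For `S̃` the vector `e₂ + e₄` is cyclic, so (i) holds and (iii) follows from (ii). -/

open Polynomial Matrix

namespace Matrix

variable {n K : Type*} [Fintype n] [DecidableEq n]

section CommRing

variable [CommRing K] {M N : Matrix n n K} {v : n → K} {m : ℕ}

theorem aeval_mulVec_eq_sum_range {p : K[X]} (hp : p.natDegree < m) :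
    aeval M p *ᵥ v = ∑ i ∈ Finset.range m, p.coeff i • (M ^ i *ᵥ v) := by
  simp only [aeval_eq_sum_range' hp, sum_mulVec, smul_mulVec]

theorem le_natDegree_minpoly_of_linearIndependent [Nontrivial K]
    (h : LinearIndependent K fun i : Fin m => M ^ (i : ℕ) *ᵥ v) :
    m ≤ (minpoly K M).natDegree := by
  by_contra! hlt
  have hsum : ∑ i : Fin m, (minpoly K M).coeff i • (M ^ (i : ℕ) *ᵥ v) = 0 := by
    rw [Fin.sum_univ_eq_sum_range (fun i => (minpoly K M).coeff i • (M ^ i *ᵥ v)),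
      ← aeval_mulVec_eq_sum_range hlt, minpoly.aeval, zero_mulVec]
  have hcoeff := Fintype.linearIndependent_iff.mp h _ hsum ⟨_, hlt⟩
  exact one_ne_zero ((minpoly.monic M.isIntegral).coeff_natDegree.symm.trans hcoeff)

theorem exists_aeval_eq_of_commute_of_span_eq_top
    (hv : Submodule.span K (Set.range fun i : Fin m => M ^ (i : ℕ) *ᵥ v) = ⊤)
    (hNM : Commute N M) : ∃ p : K[X], aeval M p = N := by
  obtain ⟨c, hc⟩ := Submodule.mem_span_range_iff_exists_fun K |>.mp
    (hv ▸ Submodule.mem_top : N *ᵥ v ∈ _)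
  set p : K[X] := ∑ i : Fin m, c i • X ^ (i : ℕ)
  have hpv : aeval M p *ᵥ v = N *ᵥ v := by
    simp only [p, ← hc, map_sum, map_smul, map_pow, aeval_X, sum_mulVec, smul_mulVec]
  refine ⟨p, toLin'.injective <| LinearMap.ext_on_range hv fun i => ?_⟩
  have hp : Commute (aeval M p) (M ^ (i : ℕ)) := by
    simpa using (Commute.all p (X ^ (i : ℕ))).map (aeval M)
  rw [toLin'_apply, toLin'_apply, mulVec_mulVec, mulVec_mulVec, hp.eq, (hNM.pow_right i).eq,
    ← mulVec_mulVec, ← mulVec_mulVec, hpv]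

end CommRing

section Field

variable [Field K]

def IsCyclicVector (M : Matrix n n K) (v : n → K) : Prop :=
  LinearIndependent K fun i : Fin (Fintype.card n) => M ^ (i : ℕ) *ᵥ v

variable {M N : Matrix n n K} {v : n → K}

theorem IsCyclicVector.charpoly_eq_minpoly (h : IsCyclicVector M v) :
    M.charpoly = minpoly K M :=
  eq_of_monic_of_dvd_of_natDegree_le (minpoly.monic M.isIntegral) M.charpoly_monic
    M.minpoly_dvd_charpoly
    (by rw [charpoly_natDegree_eq_dim]; exact le_natDegree_minpoly_of_linearIndependent h)

theorem IsCyclicVector.exists_aeval_eq_of_commute (h : IsCyclicVector M v) (hNM : Commute N M) :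
    ∃ p : K[X], aeval M p = N :=
  exists_aeval_eq_of_commute_of_span_eq_top
    (LinearIndependent.span_eq_top_of_card_eq_finrank' h (by simp)) hNM

end Field

end Matrix

def sTilde : Matrix (Fin 5) (Fin 5) ℝ :=
  !![0,1,1,1,1; 1,1,0,0,0; 1,0,1,0,0; 1,0,0,0,0; 1,0,0,0,0]

def hMat : Matrix (Fin 5) (Fin 5) ℝ :=
  !![0,0,0,0,0; 0,1,-1,0,0; 0,-1,1,0,0; 0,0,0,0,0; 0,0,0,0,0]

theorem commute_hMat_sTilde : Commute hMat sTilde := by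
  ext i j
  fin_cases i <;> fin_cases j <;> simp [hMat, sTilde, mul_apply, Fin.sum_univ_five]

theorem sTilde_pow_mulVec : (fun i : Fin 5 => sTilde ^ (i : ℕ) *ᵥ ![0,1,0,1,0]) =
    ![![0,1,0,1,0], ![2,1,0,0,0], ![1,3,2,2,2], ![9,4,3,1,1], ![9,13,12,9,9]] := by
  ext i j
  fin_cases i <;> fin_cases j <;>
    simp [pow_succ', sTilde, mulVec, dotProduct, Fin.sum_univ_five] <;> norm_num

theorem isCyclicVector_sTilde : IsCyclicVector sTilde ![0,1,0,1,0] := by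
  change LinearIndependent ℝ fun i : Fin 5 => sTilde ^ (i : ℕ) *ᵥ ![0,1,0,1,0]
  rw [sTilde_pow_mulVec, Fintype.linearIndependent_iff]
  intro g hg
  have h0 := congrFun hg 0
  have h1 := congrFun hg 1
  have h2 := congrFun hg 2
  have h3 := congrFun hg 3
  have h4 := congrFun hg 4
  simp only [Finset.sum_apply, Pi.smul_apply, smul_eq_mul, Fin.sum_univ_five, cons_val',
    cons_val_zero, cons_val_one, cons_val, cons_val_fin_one, mul_zero, mul_one, zero_add, add_zero,
    Pi.zero_apply]
    at h0 h1 h2 h3 h4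
  intro i
  fin_cases i <;> simp only [Fin.zero_eta, Fin.mk_one, Fin.reduceFinMk] <;> linarith

theorem stmt_10 :
    let Stilde : Matrix (Fin 5) (Fin 5) ℝ :=
      !![0,1,1,1,1; 1,1,0,0,0; 1,0,1,0,0; 1,0,0,0,0; 1,0,0,0,0]
    let H : Matrix (Fin 5) (Fin 5) ℝ :=
      !![0,0,0,0,0; 0,1,-1,0,0; 0,-1,1,0,0; 0,0,0,0,0; 0,0,0,0,0]
    Stilde.charpoly = minpoly ℝ Stilde ∧
      H * Stilde = Stilde * H ∧
      ∃ p : ℝ[X], Polynomial.aeval Stilde p = H :=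
  ⟨isCyclicVector_sTilde.charpoly_eq_minpoly, commute_hMat_sTilde,
    isCyclicVector_sTilde.exists_aeval_eq_of_commute commute_hMat_sTilde⟩
end

section
/- Let S' be the 4×4 real symmetric matrix with S'_{1,2} = S'_{2,1} = S'_{2,3} = S'_{3,2} = S'_{3,4} = S'_{4,3} = S'_{1,4} = S'_{4,1} = 1 and all other entries 0, and let H' be the 4×4 real matrix with rows (0,0,−1,1), (0,−1,1,0), (−1,1,0,0), (1,0,0,−1). Then there is no polynomial h with real coefficients such that h(S') = H'. -/
/-! The reflection of the 4-cycle exchanging vertices 1 and 3 is an automorphism of the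
graph, so its permutation matrix commutes with `S'` and hence with every polynomial in `S'`.
It does not commute with `H'`. -/

open Polynomial Matrix

theorem Polynomial.not_exists_aeval_eq_of_commute {R A : Type*} [CommSemiring R] [Semiring A]
    [Algebra R A] {a b c : A} (hab : Commute a b) (hac : ¬Commute a c) :
    ¬∃ p : R[X], aeval b p = c := by
  rintro ⟨p, rfl⟩
  exact hac (Algebra.commute_of_mem_adjoin_singleton_of_commute
    (aeval_mem_adjoin_singleton R b) hab)

theorem stmt_14 :
    let S' : Matrix (Fin 4) (Fin 4) ℝ :=
      !![0,1,0,1; 1,0,1,0; 0,1,0,1; 1,0,1,0]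
    let H' : Matrix (Fin 4) (Fin 4) ℝ :=
      !![0,0,-1,1; 0,-1,1,0; -1,1,0,0; 1,0,0,-1]
    ¬ ∃ h : ℝ[X], Polynomial.aeval S' h = H' := by
  intro S' H'
  let P : Matrix (Fin 4) (Fin 4) ℝ := (Equiv.swap 0 2).permMatrix ℝ
  have hPS : Commute P S' := by
    ext i j
    fin_cases i <;> fin_cases j <;>
      simp [P, S', Matrix.mul_apply, Fin.sum_univ_four, Equiv.swap_apply_def]
  have hPH : ¬Commute P H' := fun h ↦ by
    have h01 := congrFun (congrFun h 0) 1
    simp [P, H', Matrix.mul_apply, Fin.sum_univ_four, Equiv.swap_apply_def] at h01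
  exact not_exists_aeval_eq_of_commute hPS hPH
end

section
/- Let T be any 4×4 real symmetric matrix with T_{1,3} = T_{3,1} = T_{2,4} = T_{4,2} = 0, and let H' be the 4×4 real matrix with rows (0,0,−1,1), (0,−1,1,0), (−1,1,0,0), (1,0,0,−1). Then there is no polynomial h with real coefficients such that h(T) = H'. -/
/-!
Every polynomial in `T` commutes with every matrix that commutes with `T`. If `h(T) = H'`, then
`T` commutes with `H'`; together with symmetry and the zero pattern this forces `T` to be invariant
under the transposition of the vertices 2 and 4 (indices `1` and `3` in `Fin 4`), so `T` commutes
with the corresponding permutation matrix. Then so does `h(T) = H'`, which it does not.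
-/

open Polynomial Matrix

theorem Matrix.commute_permMatrix_iff {n R : Type*} [Fintype n] [DecidableEq n]
    [NonAssocSemiring R] (σ : Equiv.Perm n) (M : Matrix n n R) :
    Commute (σ.permMatrix R) M ↔ M.submatrix σ σ = M := by
  rw [commute_iff_eq, PEquiv.toMatrix_toPEquiv_mul, PEquiv.mul_toMatrix_toPEquiv,
    ← Matrix.ext_iff, ← Matrix.ext_iff]
  refine forall_congr' fun i => ?_
  rw [← σ.forall_congr_right]
  simp

def Hprime : Matrix (Fin 4) (Fin 4) ℝ :=
  !![0,0,-1,1; 0,-1,1,0; -1,1,0,0; 1,0,0,-1]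

theorem submatrix_swap_eq_of_commute_Hprime {T : Matrix (Fin 4) (Fin 4) ℝ} (hsymm : T.IsSymm)
    (h02 : T 0 2 = 0) (h13 : T 1 3 = 0) (hcomm : Commute T Hprime) :
    T.submatrix (Equiv.swap 1 3) (Equiv.swap 1 3) = T := by
  have entry (i j : Fin 4) := congrFun₂ hcomm.eq i j
  have e01 := entry 0 1
  have e02 := entry 0 2
  have e03 := entry 0 3
  have e12 := entry 1 2
  have e13 := entry 1 3
  have e23 := entry 2 3
  simp only [Hprime, mul_apply, of_apply, cons_val', cons_val_one, cons_val_zero, cons_val_fin_one,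
    cons_val, Fin.sum_univ_four, mul_zero, mul_neg, mul_one, zero_add, add_zero, zero_mul, neg_mul,
    one_mul] at e01 e02 e03 e12 e13 e23
  have symm (i j : Fin 4) : T j i = T i j := hsymm.apply i j
  ext i j
  fin_cases i <;> fin_cases j <;> simp [Equiv.swap_apply_of_ne_of_ne] <;>
    linarith [symm 0 1, symm 0 2, symm 0 3, symm 1 2, symm 1 3, symm 2 3]

theorem Hprime_submatrix_swap_ne : Hprime.submatrix (Equiv.swap 1 3) (Equiv.swap 1 3) ≠ Hprime := by
  intro h
  simpa [Hprime, Equiv.swap_apply_of_ne_of_ne] using congrFun₂ h 1 0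

theorem stmt_17_general (T : Matrix (Fin 4) (Fin 4) ℝ) (hsymm : T.IsSymm)
    (h02 : T 0 2 = 0) (h13 : T 1 3 = 0) :
    let H' : Matrix (Fin 4) (Fin 4) ℝ :=
      !![0,0,-1,1; 0,-1,1,0; -1,1,0,0; 1,0,0,-1]
    ¬ ∃ h : ℝ[X], Polynomial.aeval T h = H' := by
  intro _ ⟨h, (hh : aeval T h = Hprime)⟩
  have commute_aeval {M : Matrix (Fin 4) (Fin 4) ℝ} (hM : Commute M T) : Commute M Hprime :=
    hh ▸ Algebra.commute_of_mem_adjoin_singleton_of_commute (aeval_mem_adjoin_singleton ℝ T) hM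
  set P := (Equiv.swap (1 : Fin 4) 3).permMatrix ℝ
  have hPT : Commute P T := (commute_permMatrix_iff _ T).2 <|
    submatrix_swap_eq_of_commute_Hprime hsymm h02 h13 (commute_aeval (Commute.refl T))
  exact Hprime_submatrix_swap_ne ((commute_permMatrix_iff _ Hprime).1 (commute_aeval hPT))

theorem stmt_17 (T : Matrix (Fin 4) (Fin 4) ℝ) (hsymm : T.IsSymm)
    (h02 : T 0 2 = 0) (h20 : T 2 0 = 0) (h13 : T 1 3 = 0) (h31 : T 3 1 = 0) :
    let H' : Matrix (Fin 4) (Fin 4) ℝ :=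
      !![0,0,-1,1; 0,-1,1,0; -1,1,0,0; 1,0,0,-1]
    ¬ ∃ h : ℝ[X], Polynomial.aeval T h = H' :=
  stmt_17_general T hsymm h02 h13
end

section
/- Let S' be the 4×4 real symmetric matrix with S'_{1,2} = S'_{2,1} = S'_{2,3} = S'_{3,2} = S'_{3,4} = S'_{4,3} = S'_{1,4} = S'_{4,1} = 1 and all other entries 0, let L = 2·I − S' be the graph Laplacian of the 4-cycle, and let H' be the 4×4 real matrix with rows (0,0,−1,1), (0,−1,1,0), (−1,1,0,0), (1,0,0,−1). Then H'·L = L·H', the characteristic polynomial of L does not equal its minimal polynomial over ℝ, and there is no polynomial h with real coefficients such that h(L) = H'. -/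
/-!
The Laplacian `L` of the 4-cycle is diagonalizable with spectrum `{0, 2, 2, 4}`, so it is
annihilated by `X (X - 2) (X - 4)`, whose degree is below the size of `L`. Every polynomial
in `L` acts on the eigenvector `(1, 0, -1, 0)` of `L` by a scalar, whereas `H'` sends it to
`(1, -1, -1, 1)`, so `H'` is not a polynomial in `L` although it commutes with it.
-/

open Polynomial Matrix

namespace Matrix

variable {n R : Type*} [Fintype n] [DecidableEq n]

theorem aeval_mulVec_of_mulVec_eq_smul [CommRing R] {A : Matrix n n R} {v : n → R} {c : R}
    (h : A *ᵥ v = c • v) (p : R[X]) : aeval A p *ᵥ v = p.eval c • v := by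
  have hpow (k : ℕ) : (A ^ k) *ᵥ v = c ^ k • v := by
    induction k with
    | zero => simp
    | succ k ih => rw [pow_succ, ← mulVec_mulVec, h, mulVec_smul, ih, smul_smul, pow_succ']
  induction p using Polynomial.induction_on' with
  | add p q hp hq => simp only [map_add, add_mulVec, hp, hq, eval_add, add_smul]
  | monomial k a =>
    rw [aeval_monomial, Algebra.algebraMap_eq_smul_one, smul_mul_assoc, one_mul, smul_mulVec,
      hpow, smul_smul, eval_monomial]

theorem not_exists_aeval_eq_of_mulVec_eq_smul [CommRing R] {A B : Matrix n n R} {v : n → R}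
    {c : R} (hA : A *ᵥ v = c • v) (hB : ∀ d : R, B *ᵥ v ≠ d • v) :
    ¬ ∃ p : R[X], aeval A p = B := by
  rintro ⟨p, rfl⟩
  exact hB _ (aeval_mulVec_of_mulVec_eq_smul hA p)

theorem charpoly_ne_minpoly_of_aeval_eq_zero [Field R] {A : Matrix n n R} {p : R[X]}
    (hp : p ≠ 0) (hA : aeval A p = 0) (hdeg : p.natDegree < Fintype.card n) :
    A.charpoly ≠ minpoly R A := by
  intro h
  have hle := natDegree_le_of_dvd (minpoly.dvd R A hA) hp
  rw [← h, charpoly_natDegree_eq_dim] at hle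
  omega

end Matrix

theorem stmt_18 :
    let S' : Matrix (Fin 4) (Fin 4) ℝ :=
      !![0,1,0,1; 1,0,1,0; 0,1,0,1; 1,0,1,0]
    let L : Matrix (Fin 4) (Fin 4) ℝ := 2 • (1 : Matrix (Fin 4) (Fin 4) ℝ) - S'
    let H' : Matrix (Fin 4) (Fin 4) ℝ :=
      !![0,0,-1,1; 0,-1,1,0; -1,1,0,0; 1,0,0,-1]
    H' * L = L * H' ∧
      L.charpoly ≠ minpoly ℝ L ∧
      ¬ ∃ h : ℝ[X], Polynomial.aeval L h = H' := by
  intro S' L H'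
  have hL : L = !![2,-1,0,-1; -1,2,-1,0; 0,-1,2,-1; -1,0,-1,2] := by
    ext i j
    fin_cases i <;> fin_cases j <;>
      simp only [L, S', Matrix.sub_apply, Matrix.smul_apply, one_apply] <;> norm_num
  have hcubic : aeval L (X * (X - C 2) * (X - C 4) : ℝ[X]) = 0 := by
    simp only [map_mul, map_sub, aeval_X, aeval_C, Algebra.algebraMap_eq_smul_one, hL]
    ext i j
    fin_cases i <;> fin_cases j <;>
      simp +decide [mul_apply, vecMul, dotProduct, Matrix.sub_apply, Matrix.smul_apply,
        Fin.sum_univ_four, one_apply, cons_val_two, cons_val_three, vecHead, vecTail] <;>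
      norm_num
  have hv : L *ᵥ ![1, 0, -1, 0] = (2 : ℝ) • ![1, 0, -1, 0] := by
    rw [hL]
    ext i
    fin_cases i <;>
      norm_num [mulVec, dotProduct, Fin.sum_univ_four, cons_val_two, cons_val_three, vecHead,
        vecTail]
  have hH'v (d : ℝ) : H' *ᵥ ![1, 0, -1, 0] ≠ d • ![1, 0, -1, 0] := fun h => by
    have h1 := congrFun h 1
    norm_num [H', mulVec, dotProduct, Fin.sum_univ_four, cons_val_two, cons_val_three, vecHead,
      vecTail] at h1
  refine ⟨?_, charpoly_ne_minpoly_of_aeval_eq_zero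
    ((monic_X.mul (monic_X_sub_C 2)).mul (monic_X_sub_C 4)).ne_zero hcubic ?_,
    not_exists_aeval_eq_of_mulVec_eq_smul hv hH'v⟩
  · rw [hL]
    ext i j
    fin_cases i <;> fin_cases j <;>
      norm_num [H', mul_apply, Fin.sum_univ_four, cons_val_two, cons_val_three, vecHead, vecTail]
  · simp only [Fintype.card_fin]
    compute_degree!
end
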